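/- In the k-shortcut graph (H'',w''), for every pair of vertices u, v ∈ S there is a path of minimum w''-length from u to v using fewer than 4m/k edges; that is, the hop diameter of (H'',w'') is less than 4m/k. -/

import Mathlib

open scoped ENNReal

/-- The length of a walk with respect to `ℝ≥0∞` edge weights. -/
noncomputable def wlen {V : Type*} (G : SimpleGraph V) (w : V → V → ℝ≥0∞) {u v : V}
    (p : G.Walk u v) : ℝ≥0∞ :=
  (p.darts.map fun d => w d.toProd.1 d.toProd.2).sum

/-- The weighted distance: the infimum of walk lengths. -/
noncomputable def wdist {V : Type*} (G : SimpleGraph V) (w : V → V → ℝ≥0∞) (u v : V) : ℝ≥0∞ :=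
  ⨅ p : G.Walk u v, wlen G w p

/-- The weights of the `k`-shortcut graph: `w''(u,v) = d_{H,w}(u,v)` if `u ∈ N(v)` or
`v ∈ N(u)`, and `w''(u,v) = w(u,v)` otherwise.  (The underlying graph is the complete
graph `⊤` on `S`.) -/
noncomputable def shortcutW {S : Type*} [DecidableEq S] (w : S → S → ℝ≥0∞)
    (N : S → Finset S) : S → S → ℝ≥0∞ :=
  fun u v => if u ∈ N v ∨ v ∈ N u then wdist (⊤ : SimpleGraph S) w u v else w u v

/-!
Take a `w''`-shortest walk `p = p₀ ⋯ p_t` with the fewest edges. Every segment of `p` is then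
hop-minimal among walks of no greater `w''`-length. Two vertices at hop distance `≥ 2` along `p`
cannot be shortcut-adjacent: the shortcut edge has weight `d(pᵢ, pⱼ)`, which is at most the
`w''`-length of the segment, since `w''` dominates `d` edgewise. Hence if `z ∈ N(pᵢ) ∩ N(pⱼ)`
with `j ≥ i + 4`, the vertex `c = p_{i+2}` lies outside `N(pᵢ)` and `N(pⱼ)`, so
`d(pᵢ, z) + d(z, pⱼ) ≤ d(pᵢ, c) + d(c, pⱼ)` and the two shortcut edges through `z` beat the
segment. So the sets `N(pᵢ)` with `i` in a fixed residue class mod 4 are pairwise disjoint,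
and `(t + 1) k ≤ 4 m`.
-/

open SimpleGraph Finset

section WeightedWalks

variable {V : Type*} {G : SimpleGraph V} {W : V → V → ℝ≥0∞} {u v x : V}

@[simp]
lemma wlen_nil (W : V → V → ℝ≥0∞) (u : V) : wlen G W (Walk.nil : G.Walk u u) = 0 := rfl

@[simp]
lemma wlen_cons (W : V → V → ℝ≥0∞) (h : G.Adj u x) (p : G.Walk x v) :
    wlen G W (Walk.cons h p) = W u x + wlen G W p := by
  simp [wlen]

lemma wlen_append (W : V → V → ℝ≥0∞) (p : G.Walk u x) (q : G.Walk x v) :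
    wlen G W (p.append q) = wlen G W p + wlen G W q := by
  simp [wlen, Walk.darts_append]

lemma wlen_reverse (hW : ∀ a b, W a b = W b a) (p : G.Walk u v) :
    wlen G W p.reverse = wlen G W p := by
  simp only [wlen, Walk.darts_reverse, List.map_reverse, List.sum_reverse, List.map_map]
  exact congrArg List.sum (List.map_congr_left fun d _ => (hW _ _).symm)

lemma wlen_bypass_le [DecidableEq V] (W : V → V → ℝ≥0∞) (p : G.Walk u v) :
    wlen G W p.bypass ≤ wlen G W p :=
  (p.darts_bypass_sublist_darts.map _).sum_le_sum fun _ _ => zero_le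

lemma wdist_le_wlen (W : V → V → ℝ≥0∞) (p : G.Walk u v) : wdist G W u v ≤ wlen G W p :=
  iInf_le _ p

lemma wdist_triangle (W : V → V → ℝ≥0∞) (u x v : V) :
    wdist G W u v ≤ wdist G W u x + wdist G W x v := by
  simp only [wdist]
  rw [ENNReal.iInf_add]
  refine le_iInf fun p => ?_
  rw [ENNReal.add_iInf]
  exact le_iInf fun q => (wdist_le_wlen W (p.append q)).trans_eq (wlen_append W p q)

lemma wdist_comm (hW : ∀ a b, W a b = W b a) (u v : V) : wdist G W u v = wdist G W v u :=
  le_antisymm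
    (le_iInf fun q => (wdist_le_wlen W q.reverse).trans_eq (wlen_reverse hW q))
    (le_iInf fun q => (wdist_le_wlen W q.reverse).trans_eq (wlen_reverse hW q))

lemma wdist_le_wlen_of_forall_adj_le {w : V → V → ℝ≥0∞}
    (hW : ∀ a b, G.Adj a b → wdist G w a b ≤ W a b) (p : G.Walk u v) :
    wdist G w u v ≤ wlen G W p := by
  induction p with
  | nil => exact wdist_le_wlen w Walk.nil
  | @cons a b c h q ih =>
    rw [wlen_cons]
    exact (wdist_triangle w a b c).trans (add_le_add (hW a b h) ih)

lemma exists_wlen_eq_wdist [Finite V] (W : V → V → ℝ≥0∞) (h : G.Reachable u v) :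
    ∃ p : G.Walk u v, wlen G W p = wdist G W u v := by
  classical
  have := Fintype.ofFinite V
  obtain ⟨q⟩ := h
  obtain ⟨p, -, hp⟩ := Finset.exists_min_image univ (fun p : G.Path u v => wlen G W p.val)
    ⟨⟨q.bypass, q.bypass_isPath⟩, mem_univ _⟩
  refine ⟨p.val, le_antisymm (le_iInf fun r => ?_) (wdist_le_wlen W _)⟩
  exact (hp ⟨r.bypass, r.bypass_isPath⟩ (mem_univ _)).trans (wlen_bypass_le W r)

def IsHopMinimal (W : V → V → ℝ≥0∞) (p : G.Walk u v) : Prop :=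
  ∀ q : G.Walk u v, wlen G W q ≤ wlen G W p → p.length ≤ q.length

lemma exists_isHopMinimal_wlen_eq_wdist [Finite V] (W : V → V → ℝ≥0∞) (h : G.Reachable u v) :
    ∃ p : G.Walk u v, wlen G W p = wdist G W u v ∧ IsHopMinimal W p := by
  classical
  obtain ⟨p₀, hp₀⟩ := exists_wlen_eq_wdist W h
  have hex : ∃ n, ∃ p : G.Walk u v, wlen G W p = wdist G W u v ∧ p.length = n :=
    ⟨p₀.length, p₀, hp₀, rfl⟩
  obtain ⟨p, hp, hlen⟩ := Nat.find_spec hex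
  refine ⟨p, hp, fun q hq => hlen ▸ Nat.find_min' hex ⟨q, ?_, rfl⟩⟩
  exact le_antisymm (hq.trans_eq hp) (wdist_le_wlen W q)

namespace IsHopMinimal

lemma append_left {p : G.Walk u x} {q : G.Walk x v} (h : IsHopMinimal W (p.append q)) :
    IsHopMinimal W p := fun r hr => by
  have := h (r.append q) (by rw [wlen_append, wlen_append]; gcongr)
  simp only [Walk.length_append] at this
  omega

lemma append_right {p : G.Walk u x} {q : G.Walk x v} (h : IsHopMinimal W (p.append q)) :
    IsHopMinimal W q := fun r hr => by
  have := h (p.append r) (by rw [wlen_append, wlen_append]; gcongr)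
  simp only [Walk.length_append] at this
  omega

lemma take {p : G.Walk u v} (h : IsHopMinimal W p) (n : ℕ) : IsHopMinimal W (p.take n) := by
  rw [← p.append_take_drop_eq n] at h
  exact h.append_left

lemma drop {p : G.Walk u v} (h : IsHopMinimal W p) (n : ℕ) : IsHopMinimal W (p.drop n) := by
  rw [← p.append_take_drop_eq n] at h
  exact h.append_right

lemma ne_of_length_pos {p : G.Walk u v} (h : IsHopMinimal W p) (hp : 0 < p.length) : u ≠ v := by
  rintro rfl
  have := h Walk.nil (by simp)
  simp only [Walk.length_nil] at this
  omega

end IsHopMinimal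

end WeightedWalks

section ShortcutGraph

variable {S : Type*} [DecidableEq S] {w : S → S → ℝ≥0∞} {N : S → Finset S} {x y : S}

lemma shortcutW_of_mem (h : x ∈ N y ∨ y ∈ N x) :
    shortcutW w N x y = wdist (⊤ : SimpleGraph S) w x y :=
  if_pos h

lemma wdist_le_shortcutW (w : S → S → ℝ≥0∞) (N : S → Finset S) (a b : S) :
    wdist (⊤ : SimpleGraph S) w a b ≤ shortcutW w N a b := by
  unfold shortcutW
  split_ifs
  · exact le_rfl
  · obtain rfl | hab := eq_or_ne a b
    · exact (wdist_le_wlen w Walk.nil).trans zero_le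
    · simpa using wdist_le_wlen w (Walk.cons ((top_adj _ _).2 hab) Walk.nil)

lemma wdist_le_wlen_shortcutW (p : (⊤ : SimpleGraph S).Walk x y) :
    wdist ⊤ w x y ≤ wlen ⊤ (shortcutW w N) p :=
  wdist_le_wlen_of_forall_adj_le (fun a b _ => wdist_le_shortcutW w N a b) p

namespace IsHopMinimal

lemma not_shortcut_of_two_le_length {p : (⊤ : SimpleGraph S).Walk x y}
    (hp : IsHopMinimal (shortcutW w N) p) (h2 : 2 ≤ p.length) : ¬(x ∈ N y ∨ y ∈ N x) := by
  intro hxy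
  have := hp (Walk.cons ((top_adj _ _).2 (hp.ne_of_length_pos (by omega))) Walk.nil) <| by
    simpa [shortcutW_of_mem hxy] using wdist_le_wlen_shortcutW p
  simp only [Walk.length_cons, Walk.length_nil] at this
  omega

lemma disjoint_of_four_le_length (hsymm : ∀ a b, w a b = w b a)
    (hNnear : ∀ v, ∀ u ∈ N v, ∀ z, z ∉ N v → z ≠ v →
      wdist (⊤ : SimpleGraph S) w v u ≤ wdist (⊤ : SimpleGraph S) w v z)
    {p : (⊤ : SimpleGraph S).Walk x y} (hp : IsHopMinimal (shortcutW w N) p)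
    (h4 : 4 ≤ p.length) : Disjoint (N x) (N y) := by
  rw [Finset.disjoint_left]
  intro z hzx hzy
  set c := p.getVert 2
  have hfst : (p.take 2).length = 2 := by simp only [Walk.take_length]; omega
  have hsnd : 2 ≤ (p.drop 2).length := by simp only [Walk.drop_length]; omega
  have hxc := (hp.take 2).not_shortcut_of_two_le_length hfst.ge
  have hcy := (hp.drop 2).not_shortcut_of_two_le_length hsnd
  have hxy := hp.not_shortcut_of_two_le_length (by omega)
  have dxz : wdist ⊤ w x z ≤ wdist ⊤ w x c :=
    hNnear x z hzx c (fun h => hxc (Or.inr h)) ((hp.take 2).ne_of_length_pos (by omega)).symm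
  have dyz : wdist ⊤ w y z ≤ wdist ⊤ w y c :=
    hNnear y z hzy c (fun h => hcy (Or.inl h)) ((hp.drop 2).ne_of_length_pos (by omega))
  have hxz : x ≠ z := by rintro rfl; exact hxy (Or.inl hzy)
  have hzy' : z ≠ y := by rintro rfl; exact hxy (Or.inr hzx)
  have := hp (Walk.cons ((top_adj _ _).2 hxz) (Walk.cons ((top_adj _ _).2 hzy') Walk.nil)) <| calc
    _ = wdist ⊤ w x z + wdist ⊤ w z y := by
      simp [shortcutW_of_mem (Or.inr hzx), shortcutW_of_mem (Or.inl hzy)]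
    _ ≤ wdist ⊤ w x c + wdist ⊤ w c y := by
      rw [wdist_comm hsymm z y, wdist_comm hsymm c y]
      gcongr
    _ ≤ wlen ⊤ (shortcutW w N) (p.take 2) + wlen ⊤ (shortcutW w N) (p.drop 2) :=
      add_le_add (wdist_le_wlen_shortcutW _) (wdist_le_wlen_shortcutW _)
    _ = wlen ⊤ (shortcutW w N) p := by rw [← wlen_append, Walk.append_take_drop_eq]
  simp only [Walk.length_cons, Walk.length_nil] at this
  omega

end IsHopMinimal

end ShortcutGraph

lemma sum_card_le_mul_card_of_disjoint {α : Type*} [Fintype α] (s : ℕ → Finset α) {d : ℕ}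
    (hd : 0 < d) (n : ℕ) (hs : ∀ i j, i + d ≤ j → j < n → Disjoint (s i) (s j)) :
    ∑ i ∈ range n, #(s i) ≤ d * Fintype.card α := by
  classical
  have hclass : ∀ r, ∑ i ∈ range n with i % d = r, #(s i) ≤ Fintype.card α := by
    intro r
    rw [← card_biUnion]
    · exact card_le_univ _
    intro i hi j hj hij
    simp only [coe_filter, mem_range, Set.mem_ofPred_eq] at hi hj
    have key : ∀ a b, a < b → a % d = b % d → a + d ≤ b := fun a b hab he =>
      have := Nat.le_of_dvd (by omega) ((Nat.modEq_iff_dvd' hab.le).1 he)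
      by omega
    rcases lt_or_gt_of_ne hij with h | h
    · exact hs i j (key i j h (hi.2.trans hj.2.symm)) hj.1
    · exact (hs j i (key j i h (hj.2.trans hi.2.symm)) hi.1).symm
  calc ∑ i ∈ range n, #(s i)
      = ∑ r ∈ range d, ∑ i ∈ range n with i % d = r, #(s i) :=
        (sum_fiberwise_of_maps_to (fun i _ => mem_range.2 (Nat.mod_lt i hd)) _).symm
    _ ≤ ∑ _r ∈ range d, Fintype.card α := sum_le_sum fun r _ => hclass r
    _ = d * Fintype.card α := by simp

theorem stmt16_general {S : Type*} [Fintype S] [DecidableEq S]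
    (w : S → S → ℝ≥0∞) (hsymm : ∀ u v, w u v = w v u)
    (k : ℕ) (hk1 : 1 ≤ k)
    (N : S → Finset S) (hNcard : ∀ v, (N v).card = k)
    (hNnear : ∀ v, ∀ u ∈ N v, ∀ z, z ∉ N v → z ≠ v →
      wdist (⊤ : SimpleGraph S) w v u ≤ wdist (⊤ : SimpleGraph S) w v z)
    (u v : S) :
    ∃ p : (⊤ : SimpleGraph S).Walk u v,
      wlen (⊤ : SimpleGraph S) (shortcutW w N) p =
        wdist (⊤ : SimpleGraph S) (shortcutW w N) u v ∧
      (p.length : ℝ) < 4 * (Fintype.card S : ℝ) / (k : ℝ) := by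
  obtain ⟨p, hp, hmin⟩ := exists_isHopMinimal_wlen_eq_wdist (shortcutW w N) (reachable_top (u := u))
  refine ⟨p, hp, ?_⟩
  have hdisj : ∀ i j, i + 4 ≤ j → j < p.length + 1 →
      Disjoint (N (p.getVert i)) (N (p.getVert j)) := by
    intro i j hij hj
    have := ((hmin.drop i).take (j - i)).disjoint_of_four_le_length hsymm hNnear
      (by simp only [Walk.take_length, Walk.drop_length]; omega)
    rwa [Walk.drop_getVert, Nat.add_sub_cancel' (by omega)] at this
  have hcount := sum_card_le_mul_card_of_disjoint (fun i => N (p.getVert i)) four_pos _ hdisj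
  simp only [hNcard, sum_const, card_range, smul_eq_mul] at hcount
  rw [lt_div_iff₀ (by exact_mod_cast hk1)]
  exact_mod_cast (show p.length * k < 4 * Fintype.card S by nlinarith)

/-- In the `k`-shortcut graph `(H'',w'')` of a complete weighted graph
`(H,w)` on `m = |S| ≥ 2` vertices, for every pair of vertices `u, v ∈ S` there is a path
of minimum `w''`-length from `u` to `v` using fewer than `4m/k` edges. -/
theorem stmt16 {S : Type*} [Fintype S] [DecidableEq S] (hm : 2 ≤ Fintype.card S)
    (w : S → S → ℝ≥0∞) (hsymm : ∀ u v, w u v = w v u)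
    (hpos : ∀ u v, u ≠ v → 0 < w u v) (hfin : ∀ u v, w u v ≠ ⊤)
    (k : ℕ) (hk1 : 1 ≤ k) (hk2 : k ≤ Fintype.card S - 1)
    (N : S → Finset S) (hNself : ∀ v, v ∉ N v) (hNcard : ∀ v, (N v).card = k)
    (hNnear : ∀ v, ∀ u ∈ N v, ∀ z, z ∉ N v → z ≠ v →
      wdist (⊤ : SimpleGraph S) w v u ≤ wdist (⊤ : SimpleGraph S) w v z)
    (u v : S) :
    ∃ p : (⊤ : SimpleGraph S).Walk u v,
      wlen (⊤ : SimpleGraph S) (shortcutW w N) p =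
        wdist (⊤ : SimpleGraph S) (shortcutW w N) u v ∧
      (p.length : ℝ) < 4 * (Fintype.card S : ℝ) / (k : ℝ) :=
  stmt16_general w hsymm k hk1 N hNcard hNnear u v
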